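/- Let R, S, T be bounded triangles with T 2ε-significant and α(R) ≤ α(T). If there are nonzero morphisms f: 𝕀^R → 𝕀^S(ε) and g: 𝕀^S → 𝕀^T(ε), then g(ε) ∘ f ≠ 0. -/

import Mathlib

open CategoryTheory Classical

noncomputable section

/-- Convexity of a subset of a poset. -/
def IsConvex {P : Type} [Preorder P] (I : Set P) : Prop :=
  ∀ ⦃p q r : P⦄, p ∈ I → q ∈ I → p ≤ r → r ≤ q → r ∈ I

/-- Zigzag connectivity within a subset. -/
def ZigzagConnected {P : Type} [Preorder P] (I : Set P) : Prop :=
  ∀ p ∈ I, ∀ q ∈ I,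
    Relation.ReflTransGen (fun a b => a ∈ I ∧ b ∈ I ∧ (a ≤ b ∨ b ≤ a)) p q

/-- An interval in a poset: nonempty, convex, and zigzag connected. -/
def IsIntervalSet {P : Type} [Preorder P] (I : Set P) : Prop :=
  I.Nonempty ∧ IsConvex I ∧ ZigzagConnected I

open scoped Classical in
/-- The pointwise vector space of the interval module: `k` (as `⊤`) on `I`, `0` off `I`. -/
def objSub (k : Type) [Field k] {P : Type} [Preorder P] (I : Set P) (p : P) : Submodule k k :=
  if p ∈ I then ⊤ else ⊥

open scoped Classical in
/-- The interval persistence module `𝕀^I` as a functor `P ⥤ ModuleCat k`. -/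
def intervalModule (k : Type) [Field k] {P : Type} [Preorder P] (I : Set P)
    (hI : IsConvex I) : P ⥤ ModuleCat.{0} k where
  obj p := ModuleCat.of k (objSub k I p)
  map {p q} h :=
    if hpq : p ∈ I ∧ q ∈ I then
      ModuleCat.ofHom
        { toFun := fun x => ⟨(x : k), by simp [objSub, hpq.2]⟩
          map_add' := by intros; rfl
          map_smul' := by intros; rfl }
    else 0
  map_id := by
    intro p
    try dsimp only
    by_cases hp : p ∈ I
    · rw [dif_pos ⟨hp, hp⟩]; rfl
    · rw [dif_neg (fun h => hp h.1)]
      haveI : Subsingleton ↥(objSub k I p) := by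
        rw [objSub, if_neg hp]; infer_instance
      apply ModuleCat.hom_ext; apply LinearMap.ext; intro x
      exact this.allEq _ _
  map_comp := by
    intro p q r hpq hqr
    try dsimp only
    by_cases hpr : p ∈ I ∧ r ∈ I
    · have hq : q ∈ I := hI hpr.1 hpr.2 (leOfHom hpq) (leOfHom hqr)
      rw [dif_pos hpr, dif_pos ⟨hpr.1, hq⟩, dif_pos ⟨hq, hpr.2⟩]
      rfl
    · rw [dif_neg hpr]
      by_cases hp : p ∈ I
      · have hr : r ∉ I := fun hr => hpr ⟨hp, hr⟩
        haveI : Subsingleton ↥(objSub k I r) := by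
          rw [objSub, if_neg hr]; infer_instance
        apply ModuleCat.hom_ext; apply LinearMap.ext; intro x
        exact this.allEq _ _
      · haveI : Subsingleton ↥(objSub k I p) := by
          rw [objSub, if_neg hp]; infer_instance
        apply ModuleCat.hom_ext; apply LinearMap.ext; intro x
        have hx : x = 0 := this.allEq x 0
        rw [hx]
        simp

open DirectSum

open scoped ENNReal

/-- Direct sum of a family of persistence modules. -/
def dsumF (k : Type) [Field k] {P : Type} [Preorder P] {ι : Type}
    (F : ι → P ⥤ ModuleCat.{0} k) : P ⥤ ModuleCat.{0} k where
  obj p := ModuleCat.of k (⨁ i, ((F i).obj p : Type))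
  map {p q} h := ModuleCat.ofHom
    (DFinsupp.mapRange.linearMap (fun i => (((F i).map h).hom : (F i).obj p →ₗ[k] (F i).obj q)))
  map_id := by
    intro p
    try dsimp only
    simp only [CategoryTheory.Functor.map_id]
    apply ModuleCat.hom_ext
    simp only [ModuleCat.hom_id, ModuleCat.hom_ofHom]
    exact DFinsupp.mapRange.linearMap_id
  map_comp := by
    intro p q r hpq hqr
    try dsimp only
    simp only [CategoryTheory.Functor.map_comp]
    apply ModuleCat.hom_ext; apply LinearMap.ext; intro x
    apply DFinsupp.ext; intro i
    rfl

/-- Use the preorder category structure on `Fin n → ℝ`. -/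
instance RnCat (n : ℕ) : Category (Fin n → ℝ) := Preorder.smallCategory _

/-- Diagonal translation by `ε` as an endofunctor of the poset `Fin n → ℝ`. -/
def transl (n : ℕ) (ε : ℝ) : (Fin n → ℝ) ⥤ (Fin n → ℝ) :=
  Monotone.functor (f := fun p i => p i + ε)
    (fun _ _ hab i => add_le_add_left (hab i) ε)

/-- `M` and `N` are `ε`-interleaved `ℝⁿ`-persistence modules. -/
def Interleaved (k : Type) [Field k] {n : ℕ} (ε : ℝ)
    (M N : (Fin n → ℝ) ⥤ ModuleCat.{0} k) : Prop :=
  ∃ _hε : 0 ≤ ε, ∃ (f : M ⟶ transl n ε ⋙ N) (g : N ⟶ transl n ε ⋙ M),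
    (∀ p : Fin n → ℝ, f.app p ≫ g.app (fun i => p i + ε) =
      M.map (homOfLE (show p ≤ fun i => p i + ε + ε from
        fun i => by show p i ≤ p i + ε + ε; linarith))) ∧
    (∀ p : Fin n → ℝ, g.app p ≫ f.app (fun i => p i + ε) =
      N.map (homOfLE (show p ≤ fun i => p i + ε + ε from
        fun i => by show p i ≤ p i + ε + ε; linarith)))

/-- An interval `I ⊆ ℝⁿ` is `δ`-trivial: it contains no pair `p ≤ p + δ`. -/
def SetTrivial {n : ℕ} (δ : ℝ) (I : Set (Fin n → ℝ)) : Prop :=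
  ¬ ∃ p, p ∈ I ∧ (fun i => p i + δ) ∈ I

/-- Barcode data: an indexed family of nonempty convex intervals in `ℝⁿ`. -/
structure Barcode (n : ℕ) where
  ι : Type
  I : ι → Set (Fin n → ℝ)
  nonempty : ∀ i, (I i).Nonempty
  conv : ∀ i, IsConvex (I i)

/-- The interval decomposable module associated to barcode data. -/
def Barcode.module (k : Type) [Field k] {n : ℕ} (B : Barcode n) :
    (Fin n → ℝ) ⥤ ModuleCat.{0} k :=
  dsumF k fun i => intervalModule k (B.I i) (B.conv i)

/-- `B` is pointwise finite dimensional. -/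
def Barcode.pfd (k : Type) [Field k] {n : ℕ} (B : Barcode n) : Prop :=
  ∀ p : Fin n → ℝ, Module.Finite k ((B.module k).obj p)

/-- An `ε`-matching between two barcodes: a partial bijection such that unmatched
intervals are `2ε`-trivial and matched intervals are `ε`-interleaved. -/
def Matched (k : Type) [Field k] {n : ℕ} (ε : ℝ) (B C : Barcode n) : Prop :=
  0 ≤ ε ∧ ∃ (A : Set B.ι) (A' : Set C.ι) (e : A ≃ A'),
    (∀ i ∉ A, SetTrivial (2 * ε) (B.I i)) ∧
    (∀ j ∉ A', SetTrivial (2 * ε) (C.I j)) ∧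
    (∀ i : A, Interleaved k ε
      (intervalModule k (B.I i) (B.conv i))
      (intervalModule k (C.I (e i)) (C.conv (e i))))

/-- The interleaving distance, valued in `ℝ≥0∞`. -/
def dInt (k : Type) [Field k] {n : ℕ} (M N : (Fin n → ℝ) ⥤ ModuleCat.{0} k) : ℝ≥0∞ :=
  ⨅ (ε : ℝ) (_ : Interleaved k ε M N), ENNReal.ofReal ε

/-- The bottleneck distance between barcodes, valued in `ℝ≥0∞`. -/
def dBot (k : Type) [Field k] {n : ℕ} (B C : Barcode n) : ℝ≥0∞ :=
  ⨅ (ε : ℝ) (_ : Matched k ε B C), ENNReal.ofReal ε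

/-- Rectangles: products of real intervals. -/
def rectSet {n : ℕ} (R : Fin n → Set ℝ) : Set (Fin n → ℝ) := {x | ∀ i, x i ∈ R i}

theorem rectSet_convex {n : ℕ} (R : Fin n → Set ℝ) (h : ∀ i, (R i).OrdConnected) :
    IsConvex (rectSet R) := by
  intro p q r hp hq hpr hrq i
  exact (h i).out (hp i) (hq i) ⟨hpr i, hrq i⟩

/-- A barcode consists of rectangles. -/
def IsRectBarcode {n : ℕ} (B : Barcode n) : Prop :=
  ∀ i, ∃ R : Fin n → Set ℝ,
    (∀ j, (R j).Nonempty ∧ (R j).OrdConnected) ∧ B.I i = rectSet R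

/-- A bounded triangle `{(x,y) | x < a, y < b} \ {x + y < 0}` in `ℝ²`. -/
def triangle (a b : ℝ) : Set (Fin 2 → ℝ) :=
  {p | p 0 < a ∧ p 1 < b ∧ 0 ≤ p 0 + p 1}

theorem triangle_convex (a b : ℝ) : IsConvex (triangle a b) :=
  fun _p _q _r hp hq hpr hrq =>
    ⟨lt_of_le_of_lt (hrq 0) hq.1, lt_of_le_of_lt (hrq 1) hq.2.1,
      le_trans hp.2.2 (add_le_add (hpr 0) (hpr 1))⟩

/-- A general (possibly unbounded) triangle, `a, b ∈ ℝ ∪ {∞}`. -/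
def triangleE (a b : EReal) : Set (Fin 2 → ℝ) :=
  {p | (p 0 : EReal) < a ∧ (p 1 : EReal) < b ∧ 0 ≤ p 0 + p 1}

theorem triangleE_convex (a b : EReal) : IsConvex (triangleE a b) :=
  fun _p _q _r hp hq hpr hrq =>
    ⟨lt_of_le_of_lt (EReal.coe_le_coe_iff.mpr (hrq 0)) hq.1,
      lt_of_le_of_lt (EReal.coe_le_coe_iff.mpr (hrq 1)) hq.2.1,
      le_trans hp.2.2 (add_le_add (hpr 0) (hpr 1))⟩

/-- A barcode consists of triangles. -/
def IsTriangleBarcode (B : Barcode 2) : Prop :=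
  ∀ i, ∃ a b : EReal, a ≠ ⊥ ∧ b ≠ ⊥ ∧ 0 < a + b ∧ B.I i = triangleE a b

/-- `I ⊆ ℝⁿ` is `δ`-significant. -/
def SetSignificant {n : ℕ} (δ : ℝ) (I : Set (Fin n → ℝ)) : Prop :=
  ∃ p, p ∈ I ∧ (fun i => p i + δ) ∈ I

/-!
Pointwise, a morphism between interval modules is a map between spaces of dimension at most one,
and naturality together with the identity structure maps inside an interval shows that it vanishes
at `p` iff it vanishes at `q ≥ p`, as long as both points lie in the region where source and
target are nonzero. For triangles this region is closed under `⊔`, so a nonzero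
`F : 𝕀^I ⟶ 𝕀^J(ε)` is injective at every `p` with `p ∈ I` and `p + ε ∈ J`; pushing a point of its
support upwards shows moreover that `max_J ≤ max_I + (ε, ε)`. Hence `max_T - (2ε, 2ε) ≤ max_R`,
and since `T` is `2ε`-significant, the midpoint `p` of the edge `x + y = 0` below
`max_T - (2ε, 2ε)` satisfies `p ∈ R`, `p + ε ∈ S` and `p + 2ε ∈ T`, so that `g(ε) ∘ f` is a
composite of injective maps at `p`.
-/

section IntervalModule

variable {k : Type} [Field k] {P : Type} [Preorder P] {I : Set P} {p q : P}

lemma mem_objSub (hp : p ∈ I) (x : k) : x ∈ objSub k I p := by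
  rw [objSub, if_pos hp]; trivial

lemma exists_eq_smul_of_ne_zero_objSub {x : objSub k I p} (hx : x ≠ 0) (y : objSub k I p) :
    ∃ c : k, y = c • x := by
  have hx' : x.1 ≠ 0 := fun h => hx (Subtype.ext h)
  exact ⟨y.1 * x.1⁻¹, Subtype.ext (by simp [hx'])⟩

lemma isZero_intervalModule_obj (hI : IsConvex I) (hp : p ∉ I) :
    Limits.IsZero ((intervalModule k I hI).obj p) := by
  have : Subsingleton (objSub k I p) := by rw [objSub, if_neg hp]; infer_instance
  exact @ModuleCat.isZero_of_subsingleton k _ ((intervalModule k I hI).obj p) this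

lemma intervalModule_map_val (hI : IsConvex I) (hp : p ∈ I) (hq : q ∈ I) (h : p ⟶ q)
    (x : objSub k I p) : ((intervalModule k I hI).map h x).1 = x.1 := by
  simp only [intervalModule, dif_pos (And.intro hp hq)]
  rfl

lemma isIso_intervalModule_map (hI : IsConvex I) (hp : p ∈ I) (hq : q ∈ I) (h : p ⟶ q) :
    IsIso ((intervalModule k I hI).map h) := by
  rw [ConcreteCategory.isIso_iff_bijective]
  refine ⟨fun x y hxy => Subtype.ext ?_, fun y => ⟨⟨y.1, mem_objSub hp _⟩, Subtype.ext ?_⟩⟩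
  · exact (intervalModule_map_val hI hp hq h x).symm.trans
      ((congrArg Subtype.val hxy).trans (intervalModule_map_val hI hp hq h y))
  · exact intervalModule_map_val hI hp hq h _

end IntervalModule

section IntervalModuleHom

variable {k : Type} [Field k] {P Q : Type} [Preorder P] [Preorder Q] {I : Set P} {J : Set Q}
  {hI : IsConvex I} {hJ : IsConvex J} {p q : P}

lemma exists_app_ne_zero {M N : P ⥤ ModuleCat.{0} k} {F : M ⟶ N} (hF : F ≠ 0) :
    ∃ p, F.app p ≠ 0 := by
  by_contra! h
  exact hF (NatTrans.ext (funext fun p => (h p).trans (NatTrans.app_zero p).symm))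

lemma app_injective_of_ne_zero {N : P ⥤ ModuleCat.{0} k} (F : intervalModule k I hI ⟶ N)
    (hF : F.app p ≠ 0) : Function.Injective (F.app p) := by
  rw [← LinearMap.ker_eq_bot (f := (F.app p).hom), LinearMap.ker_eq_bot']
  intro x hx
  by_contra hx0
  refine hF (ModuleCat.hom_ext (LinearMap.ext fun y => ?_))
  obtain ⟨c, rfl⟩ := exists_eq_smul_of_ne_zero_objSub hx0 y
  change (F.app p).hom (c • x) = 0
  rw [map_smul, hx, smul_zero]

variable {Φ : P ⥤ Q} (F : intervalModule k I hI ⟶ Φ ⋙ intervalModule k J hJ)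

lemma mem_of_app_ne_zero (hF : F.app p ≠ 0) : p ∈ I ∧ Φ.obj p ∈ J := by
  constructor
  · by_contra hp
    exact hF ((isZero_intervalModule_obj hI hp).eq_of_src _ _)
  · by_contra hp
    exact hF ((isZero_intervalModule_obj hJ hp).eq_of_tgt _ _)

lemma app_eq_zero_iff_of_le (hpq : p ≤ q) (hp : p ∈ I) (hq : q ∈ I) (hp' : Φ.obj p ∈ J)
    (hq' : Φ.obj q ∈ J) : F.app p = 0 ↔ F.app q = 0 := by
  have hnat := F.naturality (homOfLE hpq)
  rw [Functor.comp_map] at hnat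
  have := isIso_intervalModule_map (k := k) hI hp hq (homOfLE hpq)
  have := isIso_intervalModule_map (k := k) hJ hp' hq' (Φ.map (homOfLE hpq))
  constructor
  · intro h0
    exact Limits.zero_of_epi_comp _ (by rw [hnat, h0, Limits.zero_comp])
  · intro h0
    exact Limits.zero_of_comp_mono _ (by rw [← hnat, h0, Limits.comp_zero])

lemma mem_of_app_ne_zero_of_le (hF : F.app p ≠ 0) (hpq : p ≤ q) (hq' : Φ.obj q ∈ J) : q ∈ I := by
  by_contra hq
  obtain ⟨-, hp'⟩ := mem_of_app_ne_zero F hF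
  have hnat := F.naturality (homOfLE hpq)
  rw [Functor.comp_map, (isZero_intervalModule_obj hI hq).eq_of_tgt
    ((intervalModule k I hI).map (homOfLE hpq)) 0, Limits.zero_comp] at hnat
  have := isIso_intervalModule_map (k := k) hJ hp' hq' (Φ.map (homOfLE hpq))
  exact hF (Limits.zero_of_comp_mono _ hnat.symm)

lemma comp_whiskerLeft_ne_zero {L : Q ⥤ ModuleCat.{0} k} (G : intervalModule k J hJ ⟶ L)
    (hp : p ∈ I) (hF : F.app p ≠ 0) (hG : G.app (Φ.obj p) ≠ 0) : F ≫ Φ.whiskerLeft G ≠ 0 := by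
  intro h
  have happ : F.app p ≫ G.app (Φ.obj p) = 0 := by
    simpa only [NatTrans.comp_app, Functor.whiskerLeft_app, NatTrans.app_zero] using
      congrArg (NatTrans.app · p) h
  have hinj : Function.Injective (F.app p ≫ G.app (Φ.obj p)) := by
    rw [hom_comp]
    exact (app_injective_of_ne_zero G hG).comp (app_injective_of_ne_zero F hF)
  rw [happ] at hinj
  have h1 : (⟨1, mem_objSub hp 1⟩ : objSub k I p) = 0 := hinj rfl
  exact one_ne_zero (congrArg Subtype.val h1)

end IntervalModuleHom

section Triangle

variable {k : Type} [Field k] {ε a b a' b' : ℝ} {p q : Fin 2 → ℝ}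

@[simp]
lemma transl_obj {n : ℕ} (x : Fin n → ℝ) : (transl n ε).obj x = fun i => x i + ε := rfl

lemma mem_triangle_of_le (hp : p ∈ triangle a b) (hpq : p ≤ q) (hq₀ : q 0 < a) (hq₁ : q 1 < b) :
    q ∈ triangle a b :=
  ⟨hq₀, hq₁, hp.2.2.trans (add_le_add (hpq 0) (hpq 1))⟩

lemma add_lt_of_setSignificant_triangle {δ : ℝ} (h : SetSignificant δ (triangle a b)) :
    2 * δ < a + b := by
  obtain ⟨p, hp, hp', hp'', -⟩ := h
  have := hp.2.2
  simp only at hp' hp''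
  linarith

variable (F : intervalModule k (triangle a b) (triangle_convex a b) ⟶
  transl 2 ε ⋙ intervalModule k (triangle a' b') (triangle_convex a' b'))

lemma lt_of_triangle_app_ne_zero (hF : F.app p ≠ 0) (hpq : p ≤ q) (hq₀ : q 0 + ε < a')
    (hq₁ : q 1 + ε < b') : q 0 < a ∧ q 1 < b := by
  have hp' : (transl 2 ε).obj p ∈ triangle a' b' := (mem_of_app_ne_zero F hF).2
  have hq' : (transl 2 ε).obj q ∈ triangle a' b' :=
    mem_triangle_of_le hp' ((transl 2 ε).monotone hpq) hq₀ hq₁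
  exact ⟨(mem_of_app_ne_zero_of_le F hF hpq hq').1, (mem_of_app_ne_zero_of_le F hF hpq hq').2.1⟩

lemma le_add_of_triangle_hom_ne_zero (hF : F ≠ 0) : a' ≤ a + ε ∧ b' ≤ b + ε := by
  obtain ⟨p, hp⟩ := exists_app_ne_zero hF
  obtain ⟨hp₀, hp₁, -⟩ := (mem_of_app_ne_zero F hp).2
  simp only [transl_obj] at hp₀ hp₁
  constructor
  · by_contra! h
    have hq₀ : max a (p 0) + ε < a' := by
      rw [← max_add_add_right]; exact max_lt h hp₀
    have hle : p ≤ ![max a (p 0), p 1] := by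
      intro i; fin_cases i <;> simp
    have := (lt_of_triangle_app_ne_zero F hp hle hq₀ hp₁).1
    simp at this
  · by_contra! h
    have hq₁ : max b (p 1) + ε < b' := by
      rw [← max_add_add_right]; exact max_lt h hp₁
    have hle : p ≤ ![p 0, max b (p 1)] := by
      intro i; fin_cases i <;> simp
    have := (lt_of_triangle_app_ne_zero F hp hle hp₀ hq₁).2
    simp at this

lemma triangle_app_ne_zero (hF : F ≠ 0) (hp : p ∈ triangle a b)
    (hp' : (transl 2 ε).obj p ∈ triangle a' b') : F.app p ≠ 0 := by
  obtain ⟨p₀, hp₀⟩ := exists_app_ne_zero hF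
  obtain ⟨hp₀I, hp₀J⟩ := mem_of_app_ne_zero F hp₀
  have hqI : p ⊔ p₀ ∈ triangle a b :=
    mem_triangle_of_le hp le_sup_left (max_lt hp.1 hp₀I.1) (max_lt hp.2.1 hp₀I.2.1)
  have hqJ : (transl 2 ε).obj (p ⊔ p₀) ∈ triangle a' b' := by
    refine mem_triangle_of_le hp' ((transl 2 ε).monotone le_sup_left) ?_ ?_ <;>
      simp only [transl_obj, Pi.sup_apply, ← max_add_add_right]
    exacts [max_lt hp'.1 hp₀J.1, max_lt hp'.2.1 hp₀J.2.1]
  have hq : F.app (p ⊔ p₀) ≠ 0 :=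
    (app_eq_zero_iff_of_le F le_sup_right hp₀I hqI hp₀J hqJ).not.mp hp₀
  exact (app_eq_zero_iff_of_le F le_sup_left hp hqI hp' hqJ).not.mpr hq

end Triangle

theorem triangle_nonzero_composite_general
    (k : Type) [Field k] (ε : ℝ) (hε : 0 ≤ ε)
    (aR bR aS bS aT bT : ℝ)
    (hTsig : SetSignificant (2 * ε) (triangle aT bT))
    (f : intervalModule k (triangle aR bR) (triangle_convex aR bR) ⟶
      transl 2 ε ⋙ intervalModule k (triangle aS bS) (triangle_convex aS bS))
    (g : intervalModule k (triangle aS bS) (triangle_convex aS bS) ⟶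
      transl 2 ε ⋙ intervalModule k (triangle aT bT) (triangle_convex aT bT))
    (hf : f ≠ 0) (hg : g ≠ 0) :
    f ≫ CategoryTheory.Functor.whiskerLeft (transl 2 ε) g ≠ 0 := by
  obtain ⟨haS, hbS⟩ := le_add_of_triangle_hom_ne_zero f hf
  obtain ⟨haT, hbT⟩ := le_add_of_triangle_hom_ne_zero g hg
  have hT := add_lt_of_setSignificant_triangle hTsig
  let p : Fin 2 → ℝ := ![(aT - bT) / 2, (bT - aT) / 2]
  have hpR : p ∈ triangle aR bR := by
    refine ⟨?_, ?_, ?_⟩ <;> simp [p] <;> linarith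
  have hpS : (transl 2 ε).obj p ∈ triangle aS bS := by
    refine ⟨?_, ?_, ?_⟩ <;> simp [p] <;> linarith
  have hpT : (transl 2 ε).obj ((transl 2 ε).obj p) ∈ triangle aT bT := by
    refine ⟨?_, ?_, ?_⟩ <;> simp [p] <;> linarith
  exact comp_whiskerLeft_ne_zero f g hpR (triangle_app_ne_zero f hf hpR hpS)
    (triangle_app_ne_zero g hg hpS hpT)

/-- **Lemma 3.16.** Let `R`, `S`, `T` be bounded triangles with `T`
`2ε`-significant and `α(R) ≤ α(T)`.  If `f : 𝕀^R ⟶ 𝕀^S(ε)` and `g : 𝕀^S ⟶ 𝕀^T(ε)` are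
nonzero, then `g(ε) ∘ f ≠ 0`. -/
theorem triangle_nonzero_composite
    (k : Type) [Field k] (ε : ℝ) (hε : 0 ≤ ε)
    (aR bR aS bS aT bT : ℝ)
    (hR : 0 < aR + bR) (hS : 0 < aS + bS) (hT : 0 < aT + bT)
    (hTsig : SetSignificant (2 * ε) (triangle aT bT))
    (hα : aR + bR ≤ aT + bT)
    (f : intervalModule k (triangle aR bR) (triangle_convex aR bR) ⟶
      transl 2 ε ⋙ intervalModule k (triangle aS bS) (triangle_convex aS bS))
    (g : intervalModule k (triangle aS bS) (triangle_convex aS bS) ⟶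
      transl 2 ε ⋙ intervalModule k (triangle aT bT) (triangle_convex aT bT))
    (hf : f ≠ 0) (hg : g ≠ 0) :
    f ≫ CategoryTheory.Functor.whiskerLeft (transl 2 ε) g ≠ 0 :=
  triangle_nonzero_composite_general k ε hε aR bR aS bS aT bT hTsig f g hf hg
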